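/- Let p ∈ [1,∞) with conjugate exponent q, and let R ⊆ P_q([0,∞)) satisfy Assumptions (OT)(i) and (OT)(iii). Then the map χ_R : P_p(ℝ) → ℝ is concave: for all m₁, m₂ ∈ P_p(ℝ) and every θ ∈ [0,1], χ_R((1−θ)m₁ + θm₂) ≥ (1−θ)χ_R(m₁) + θχ_R(m₂). -/

import Mathlib

open MeasureTheory ENNReal

/-- `M_s(m)`: the moment of order `s ∈ [1,∞]` of a measure `m` on `ℝ`
(for `s = ∞`, the essential supremum of `|x|`, i.e. the sup of `|x|` over the support). -/
noncomputable def Mmom (s : ℝ≥0∞) (m : Measure ℝ) : ℝ≥0∞ :=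
  eLpNorm (fun x : ℝ => x) s m

/-- Assumption (OT)(i): `R` is a bounded set of probability measures with finite `q`-moment. -/
def OTone (q : ℝ≥0∞) (R : Set (Measure ℝ)) : Prop :=
  (∀ r ∈ R, IsProbabilityMeasure r) ∧ (⨆ r ∈ R, Mmom q r) < ⊤

/-- Assumption (OT)(ii): every `r ∈ R` is supported in `[0,∞)` and has expectation `1`. -/
def OTtwo (R : Set (Measure ℝ)) : Prop :=
  ∀ r ∈ R, r (Set.Iio (0:ℝ)) = 0 ∧ ∫⁻ y, ENNReal.ofReal y ∂r = 1

/-- The value `χ_R(m)` of the generalized optimal transport problem: the supremum of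
`∫ x·y dπ` over transport plans `π` with first marginal `m` and second marginal in `R`. -/
noncomputable def chi (R : Set (Measure ℝ)) (m : Measure ℝ) : ℝ :=
  sSup {v : ℝ | ∃ π : Measure (ℝ × ℝ), IsProbabilityMeasure π ∧
    π.map Prod.fst = m ∧ π.map Prod.snd ∈ R ∧ v = ∫ z : ℝ × ℝ, z.1 * z.2 ∂π}

/-- Assumption (OT)(iii): `R` is convex and closed for the weak-* topology induced by
pairing with continuous functions of `q`-growth. -/
def OTthree (q : ℝ≥0∞) (R : Set (Measure ℝ)) : Prop :=
  (∀ r₁ ∈ R, ∀ r₂ ∈ R, ∀ θ : ℝ, 0 ≤ θ → θ ≤ 1 →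
    ENNReal.ofReal (1 - θ) • r₁ + ENNReal.ofReal θ • r₂ ∈ R) ∧
  (∀ m : Measure ℝ, IsProbabilityMeasure m → Mmom q m < ⊤ →
    (∀ ε : ℝ, 0 < ε → ∀ G : Finset (ℝ → ℝ),
      (∀ g ∈ G, Continuous g ∧ ∃ C : ℝ, ∀ y : ℝ, |g y| ≤ C * (1 + |y| ^ q.toReal)) →
      ∃ r ∈ R, ∀ g ∈ G, |(∫ x, g x ∂m) - ∫ x, g x ∂r| < ε) → m ∈ R)


/-!
Plans `π₁, π₂` for `m₁, m₂` with second marginals in `R` mix into the plan `(1-θ)π₁ + θπ₂` for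
the mixture `(1-θ)m₁ + θm₂`: its second marginal lies in `R` by convexity, and the value
`∫ x y dπ` is affine in `π`. Hölder's inequality makes these values integrals of integrable
functions and bounds them by `M_p(m) · sup_{r ∈ R} M_q(r)`, so taking suprema is legitimate.
-/

open scoped Pointwise

namespace MeasureTheory

variable {α : Type*} [MeasurableSpace α] {μ ν : Measure α}

theorem MemLp.add_measure {F : Type*} [NormedAddCommGroup F] {f : α → F} {p : ℝ≥0∞}
    (hμ : MemLp f p μ) (hν : MemLp f p ν) : MemLp f p (μ + ν) := by
  have hf : AEStronglyMeasurable f (μ + ν) := hμ.1.add_measure hν.1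
  rcases eq_or_ne p 0 with rfl | hp0
  · exact memLp_zero_iff_aestronglyMeasurable.2 hf
  rcases eq_or_ne p ⊤ with rfl | hptop
  · refine ⟨hf, ?_⟩
    rw [eLpNorm_exponent_top]
    refine (eLpNormEssSup_le_of_ae_enorm_bound (ae_add_measure_iff.2
      ⟨ae_le_eLpNormEssSup.mono fun _ h => h.trans (le_max_left _ _),
       ae_le_eLpNormEssSup.mono fun _ h => h.trans (le_max_right _ _)⟩)).trans_lt ?_
    exact max_lt hμ.2 hν.2
  · rw [← integrable_norm_rpow_iff hf hp0 hptop]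
    exact ((integrable_norm_rpow_iff hμ.1 hp0 hptop).2 hμ).add_measure
      ((integrable_norm_rpow_iff hν.1 hp0 hptop).2 hν)

theorem isProbabilityMeasure_ofReal_smul_add [IsProbabilityMeasure μ] [IsProbabilityMeasure ν]
    {θ : ℝ} (hθ0 : 0 ≤ θ) (hθ1 : θ ≤ 1) :
    IsProbabilityMeasure (ENNReal.ofReal (1 - θ) • μ + ENNReal.ofReal θ • ν) := by
  constructor
  simp only [Measure.coe_add, Pi.add_apply, Measure.smul_apply, smul_eq_mul, measure_univ,
    mul_one]
  rw [← ENNReal.ofReal_add (by linarith) hθ0]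
  norm_num

end MeasureTheory

theorem Mmom_map {α : Type*} [MeasurableSpace α] {f : α → ℝ} (hf : Measurable f)
    (p : ℝ≥0∞) (μ : Measure α) : Mmom p (μ.map f) = eLpNorm f p μ :=
  eLpNorm_map_measure aestronglyMeasurable_id hf.aemeasurable

theorem Mmom_add_lt_top {p : ℝ≥0∞} {μ ν : Measure ℝ} (hμ : Mmom p μ < ⊤) (hν : Mmom p ν < ⊤)
    {a b : ℝ≥0∞} (ha : a ≠ ⊤) (hb : b ≠ ⊤) : Mmom p (a • μ + b • ν) < ⊤ :=
  ((MemLp.smul_measure ⟨aestronglyMeasurable_id, hμ⟩ ha).add_measure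
    (MemLp.smul_measure ⟨aestronglyMeasurable_id, hν⟩ hb)).2

section Holder

variable {p q : ℝ≥0∞}

theorem eLpNorm_fst_mul_snd_le (hpq : p⁻¹ + q⁻¹ = 1) (π : Measure (ℝ × ℝ)) :
    eLpNorm (fun z : ℝ × ℝ => z.1 * z.2) 1 π ≤
      Mmom p (π.map Prod.fst) * Mmom q (π.map Prod.snd) := by
  have : ENNReal.HolderTriple p q 1 := ⟨by rwa [inv_one]⟩
  rw [Mmom_map measurable_fst, Mmom_map measurable_snd]
  exact eLpNorm_smul_le_mul_eLpNorm (φ := Prod.fst) measurable_snd.aestronglyMeasurable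
    measurable_fst.aestronglyMeasurable

theorem integrable_fst_mul_snd (hpq : p⁻¹ + q⁻¹ = 1) {π : Measure (ℝ × ℝ)}
    (hfst : Mmom p (π.map Prod.fst) < ⊤) (hsnd : Mmom q (π.map Prod.snd) < ⊤) :
    Integrable (fun z : ℝ × ℝ => z.1 * z.2) π :=
  memLp_one_iff_integrable.1 ⟨(continuous_fst.mul continuous_snd).aestronglyMeasurable,
    (eLpNorm_fst_mul_snd_le hpq π).trans_lt (ENNReal.mul_lt_top hfst hsnd)⟩

theorem ofReal_integral_fst_mul_snd_le (hpq : p⁻¹ + q⁻¹ = 1) (π : Measure (ℝ × ℝ)) :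
    ENNReal.ofReal (∫ z : ℝ × ℝ, z.1 * z.2 ∂π) ≤
      Mmom p (π.map Prod.fst) * Mmom q (π.map Prod.snd) :=
  calc ENNReal.ofReal (∫ z : ℝ × ℝ, z.1 * z.2 ∂π)
      ≤ ‖∫ z : ℝ × ℝ, z.1 * z.2 ∂π‖ₑ := Real.ofReal_le_enorm _
    _ ≤ ∫⁻ z, ‖z.1 * z.2‖ₑ ∂π := enorm_integral_le_lintegral_enorm _
    _ = eLpNorm (fun z : ℝ × ℝ => z.1 * z.2) 1 π := eLpNorm_one_eq_lintegral_enorm.symm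
    _ ≤ _ := eLpNorm_fst_mul_snd_le hpq π

end Holder

def transportValues (R : Set (Measure ℝ)) (m : Measure ℝ) : Set ℝ :=
  {v : ℝ | ∃ π : Measure (ℝ × ℝ), IsProbabilityMeasure π ∧
    π.map Prod.fst = m ∧ π.map Prod.snd ∈ R ∧ v = ∫ z : ℝ × ℝ, z.1 * z.2 ∂π}

theorem chi_eq_sSup_transportValues (R : Set (Measure ℝ)) (m : Measure ℝ) :
    chi R m = sSup (transportValues R m) := rfl

section TransportValues

variable {R : Set (Measure ℝ)} {p q : ℝ≥0∞}

theorem transportValues_nonempty {r : Measure ℝ} [IsProbabilityMeasure r] (hr : r ∈ R)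
    (m : Measure ℝ) [IsProbabilityMeasure m] : (transportValues R m).Nonempty :=
  ⟨_, m.prod r, inferInstance, by simp, by simpa using hr, rfl⟩

theorem transportValues_bddAbove (hpq : p⁻¹ + q⁻¹ = 1) (hR : (⨆ r ∈ R, Mmom q r) < ⊤)
    {m : Measure ℝ} (hm : Mmom p m < ⊤) : BddAbove (transportValues R m) := by
  refine ⟨(Mmom p m * ⨆ r ∈ R, Mmom q r).toReal, ?_⟩
  rintro _ ⟨π, -, hfst, hsnd, rfl⟩
  refine (ENNReal.ofReal_le_iff_le_toReal (ENNReal.mul_lt_top hm hR).ne).1 ?_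
  calc ENNReal.ofReal (∫ z : ℝ × ℝ, z.1 * z.2 ∂π)
      ≤ Mmom p (π.map Prod.fst) * Mmom q (π.map Prod.snd) :=
        ofReal_integral_fst_mul_snd_le hpq π
    _ ≤ Mmom p m * ⨆ r ∈ R, Mmom q r := by
        rw [hfst]
        exact mul_le_mul_right (le_biSup _ hsnd) _

theorem transportValues_mix_subset (hpq : p⁻¹ + q⁻¹ = 1) (hRq : ∀ r ∈ R, Mmom q r < ⊤)
    (hconv : ∀ r₁ ∈ R, ∀ r₂ ∈ R, ∀ θ : ℝ, 0 ≤ θ → θ ≤ 1 →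
      ENNReal.ofReal (1 - θ) • r₁ + ENNReal.ofReal θ • r₂ ∈ R)
    {m₁ m₂ : Measure ℝ} (hm₁ : Mmom p m₁ < ⊤) (hm₂ : Mmom p m₂ < ⊤)
    {θ : ℝ} (hθ0 : 0 ≤ θ) (hθ1 : θ ≤ 1) :
    (1 - θ) • transportValues R m₁ + θ • transportValues R m₂ ⊆
      transportValues R (ENNReal.ofReal (1 - θ) • m₁ + ENNReal.ofReal θ • m₂) := by
  rintro _ ⟨_, ⟨v₁, ⟨π₁, hπ₁, hfst₁, hsnd₁, rfl⟩, rfl⟩, _, ⟨v₂, ⟨π₂, hπ₂, hfst₂, hsnd₂, rfl⟩,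
    rfl⟩, rfl⟩
  have hint₁ := integrable_fst_mul_snd hpq (hfst₁ ▸ hm₁) (hRq _ hsnd₁)
  have hint₂ := integrable_fst_mul_snd hpq (hfst₂ ▸ hm₂) (hRq _ hsnd₂)
  refine ⟨ENNReal.ofReal (1 - θ) • π₁ + ENNReal.ofReal θ • π₂,
    isProbabilityMeasure_ofReal_smul_add hθ0 hθ1, ?_, ?_, ?_⟩
  · rw [Measure.map_add _ _ measurable_fst, Measure.map_smul, Measure.map_smul, hfst₁, hfst₂]
  · rw [Measure.map_add _ _ measurable_snd, Measure.map_smul, Measure.map_smul]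
    exact hconv _ hsnd₁ _ hsnd₂ θ hθ0 hθ1
  · rw [integral_add_measure (hint₁.smul_measure ENNReal.ofReal_ne_top)
      (hint₂.smul_measure ENNReal.ofReal_ne_top), integral_smul_measure, integral_smul_measure,
      ENNReal.toReal_ofReal (by linarith), ENNReal.toReal_ofReal hθ0]

end TransportValues

theorem smul_csSup_add_smul_csSup_le {a b : ℝ} (ha : 0 ≤ a) (hb : 0 ≤ b) {s t u : Set ℝ}
    (hs : s.Nonempty) (hs' : BddAbove s) (ht : t.Nonempty) (ht' : BddAbove t)
    (hu : BddAbove u) (hstu : a • s + b • t ⊆ u) : a * sSup s + b * sSup t ≤ sSup u := by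
  rw [← smul_eq_mul, ← smul_eq_mul, ← Real.sSup_smul_of_nonneg ha,
    ← Real.sSup_smul_of_nonneg hb, ← csSup_add hs.smul_set (hs'.smul_of_nonneg ha)
      ht.smul_set (ht'.smul_of_nonneg hb)]
  exact csSup_le_csSup hu (hs.smul_set.add ht.smul_set) hstu

theorem chi_concave_general
    (p q : ℝ≥0∞) (hpq : p⁻¹ + q⁻¹ = 1)
    (R : Set (Measure ℝ)) (hR1 : OTone q R)
    (hR3 : OTthree q R)
    (m₁ m₂ : Measure ℝ)
    (hm₁ : IsProbabilityMeasure m₁) (hm₁p : Mmom p m₁ < ⊤)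
    (hm₂ : IsProbabilityMeasure m₂) (hm₂p : Mmom p m₂ < ⊤)
    (θ : ℝ) (hθ0 : 0 ≤ θ) (hθ1 : θ ≤ 1) :
    (1 - θ) * chi R m₁ + θ * chi R m₂ ≤
      chi R (ENNReal.ofReal (1 - θ) • m₁ + ENNReal.ofReal θ • m₂) := by
  rcases R.eq_empty_or_nonempty with rfl | ⟨r, hr⟩
  · simp [chi]
  have := hR1.1 r hr
  simp only [chi_eq_sSup_transportValues]
  exact smul_csSup_add_smul_csSup_le (by linarith) hθ0
    (transportValues_nonempty hr m₁) (transportValues_bddAbove hpq hR1.2 hm₁p)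
    (transportValues_nonempty hr m₂) (transportValues_bddAbove hpq hR1.2 hm₂p)
    (transportValues_bddAbove hpq hR1.2
      (Mmom_add_lt_top hm₁p hm₂p ENNReal.ofReal_ne_top ENNReal.ofReal_ne_top))
    (transportValues_mix_subset hpq (fun r hr => (le_biSup _ hr).trans_lt hR1.2) hR3.1
      hm₁p hm₂p hθ0 hθ1)

/-- Concavity of `χ_R` on `P_p(ℝ)` when `R ⊆ P_q([0,∞))` satisfies (OT)(i) and (OT)(iii). -/
theorem chi_concave
    (p q : ℝ≥0∞) (hp1 : 1 ≤ p) (hptop : p ≠ ⊤) (hpq : p⁻¹ + q⁻¹ = 1)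
    (R : Set (Measure ℝ)) (hR1 : OTone q R)
    (hRpos : ∀ r ∈ R, r (Set.Iio (0:ℝ)) = 0)
    (hR3 : OTthree q R)
    (m₁ m₂ : Measure ℝ)
    (hm₁ : IsProbabilityMeasure m₁) (hm₁p : Mmom p m₁ < ⊤)
    (hm₂ : IsProbabilityMeasure m₂) (hm₂p : Mmom p m₂ < ⊤)
    (θ : ℝ) (hθ0 : 0 ≤ θ) (hθ1 : θ ≤ 1) :
    (1 - θ) * chi R m₁ + θ * chi R m₂ ≤
      chi R (ENNReal.ofReal (1 - θ) • m₁ + ENNReal.ofReal θ • m₂) :=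
  chi_concave_general p q hpq R hR1 hR3 m₁ m₂ hm₁ hm₁p hm₂ hm₂p θ hθ0 hθ1
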